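/- arXiv:1603.06247 — 4 statements merged into one kernel-verified Lean document; each statement's English description precedes it below -/
import Mathlib

section
/- The singular point (1:1:1:1) of the sextic surface F defined by Q = 0 is an ordinary double point (node): the 4×4 Hessian matrix (∂²Q/∂xᵢ∂xⱼ) evaluated at (1,1,1,1) has rank exactly 3. -/
/-!
The Hessian `H` of `Q` at `p = (1,1,1,1)` is computed explicitly. Since `Q` is homogeneous of
degree 6, Euler's relation gives `H p = 5 ∇Q(p) = 0` at the singular point `p`, so `rank H ≤ 3`;
the leading `3 × 3` minor of `H` has determinant `28² · (-8) ≠ 0`, so `rank H ≥ 3`.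
-/

open MvPolynomial Matrix

/-- The 56-nodal sextic `Q = x₀⁵x₂ + x₀x₁⁵ + x₁x₂⁵ − 5x₀²x₁²x₂²
    + (x₀³x₁ + x₀x₂³ + x₁³x₂)x₃² − x₃⁶`. -/
noncomputable def Q : MvPolynomial (Fin 4) ℂ :=
  X 0 ^ 5 * X 2 + X 0 * X 1 ^ 5 + X 1 * X 2 ^ 5 - 5 * X 0 ^ 2 * X 1 ^ 2 * X 2 ^ 2
    + (X 0 ^ 3 * X 1 + X 0 * X 2 ^ 3 + X 1 ^ 3 * X 2) * X 3 ^ 2 - X 3 ^ 6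

@[simp]
theorem Derivation.map_ofNat {R A M : Type*} [CommSemiring R] [CommSemiring A] [Algebra R A]
    [AddCommMonoid M] [Module A M] [Module R M] (D : Derivation R A M) (n : ℕ) [n.AtLeastTwo] :
    D (no_index (OfNat.ofNat n)) = 0 :=
  D.map_natCast n

theorem Matrix.rank_lt_card_width_of_mulVec_eq_zero {m n K : Type*} [Fintype n] [Field K]
    (A : Matrix m n K) {v : n → K} (hv : v ≠ 0) (hAv : A *ᵥ v = 0) :
    A.rank < Fintype.card n := by
  have hker : 0 < Module.finrank K (LinearMap.ker A.mulVecLin) :=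
    Module.finrank_pos_iff_exists_ne_zero.mpr ⟨⟨v, hAv⟩, Subtype.coe_ne_coe.mp hv⟩
  have hsum := LinearMap.finrank_range_add_finrank_ker A.mulVecLin
  rw [Module.finrank_fintype_fun_eq_card] at hsum
  rw [rank]
  omega

theorem Matrix.card_le_rank_of_det_submatrix_ne_zero {m n o K : Type*} [Fintype n] [Fintype o]
    [DecidableEq o] [Field K] (A : Matrix m n K) (r : o → m) (c : o → n)
    (hdet : (A.submatrix r c).det ≠ 0) : Fintype.card o ≤ A.rank := by
  rw [← rank_of_isUnit _ ((isUnit_iff_isUnit_det _).mpr hdet.isUnit)]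
  exact rank_submatrix_le A r c

theorem hessian_Q_at_one :
    (of fun i j : Fin 4 => eval (fun _ => (1 : ℂ)) (pderiv i (pderiv j Q))) =
      !![16, -12, -12, 8; -12, 16, -12, 8; -12, -12, 16, 8; 8, 8, 8, -24] := by
  ext i j
  fin_cases i <;> fin_cases j <;>
    · simp [Q, pderiv_X, Pi.single_apply]
      norm_num

/-- The singular point (1:1:1:1) of the sextic `Q = 0` is a node: the Hessian
matrix of `Q` at `(1,1,1,1)` has rank exactly 3. -/
theorem node_at_1111 :
    (Matrix.of fun i j : Fin 4 =>
      eval (fun _ => (1 : ℂ)) (pderiv i (pderiv j Q))).rank = 3 := by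
  rw [hessian_Q_at_one]
  apply le_antisymm
  · refine Nat.lt_succ_iff.mp (rank_lt_card_width_of_mulVec_eq_zero _ one_ne_zero ?_)
    ext i
    fin_cases i <;>
      · simp only [mulVec, dotProduct, Fin.sum_univ_four, of_apply, cons_val', cons_val,
          cons_val_zero, cons_val_one, cons_val_fin_one, Pi.one_apply, mul_one, Pi.zero_apply]
        norm_num
  · refine card_le_rank_of_det_submatrix_ne_zero _ (Fin.castSucc : Fin 3 → Fin 4) Fin.castSucc ?_
    simp only [det_fin_three, submatrix_apply, Fin.castSucc_zero, Fin.castSucc_one,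
      Fin.reduceCastSucc, of_apply, cons_val', cons_val, cons_val_zero, cons_val_one,
      cons_val_fin_one]
    norm_num
end

section
/- Every singular point of the sextic surface F defined by Q = 0 is a node: for every p ∈ ℂ⁴ \ {0} with Q(p) = 0 and all four partial derivatives of Q vanishing at p, the 4×4 Hessian matrix (∂²Q/∂xᵢ∂xⱼ)(p) has rank exactly 3. -/
open MvPolynomial

/-!
Differentiating Euler's identity `∑ xⱼ ∂ⱼQ = 6 Q` gives `H(p) p = 5 ∇Q(p)`, so at a singular
point the nonzero vector `p` lies in the kernel of the Hessian `H(p)`, whose rank is at most 3.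

For the lower bound, the principal `3 × 3` minor of `H(p)` on `x₀, x₁, x₂` cannot vanish at a
singular point: `x₀¹⁹` lies in the ideal generated by the partial derivatives of `Q` and that
minor. Both `Q` and the minor are invariant under cycling `x₀, x₁, x₂`, so `x₁` and `x₂` vanish as
well, and then `∂₃Q = -6 x₃⁵` forces `x₃ = 0`.
-/

open scoped Matrix

namespace Matrix

variable {m n K : Type*} [Fintype n]

theorem rank_lt_card_of_mulVec_eq_zero [Field K] {A : Matrix m n K} {v : n → K} (hv : v ≠ 0)
    (hAv : A *ᵥ v = 0) : A.rank < Fintype.card n := by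
  have hker : LinearMap.ker A.mulVecLin ≠ ⊥ := fun h ↦ hv <| LinearMap.ker_eq_bot'.mp h v hAv
  have hpos : 0 < Module.finrank K (LinearMap.ker A.mulVecLin) :=
    Nat.pos_of_ne_zero (mt Submodule.finrank_eq_zero.mp hker)
  have := LinearMap.finrank_range_add_finrank_ker A.mulVecLin
  rw [Module.finrank_fintype_fun_eq_card] at this
  rw [rank]
  omega

theorem le_rank_of_det_submatrix_ne_zero [CommRing K] [IsDomain K] {k : ℕ} (A : Matrix m n K)
    (r : Fin k → m) (c : Fin k → n) (h : (A.submatrix r c).det ≠ 0) : k ≤ A.rank := by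
  simpa [rank_of_det_ne_zero h] using A.rank_submatrix_le r c

end Matrix

namespace MvPolynomial

variable {σ R : Type*} [CommSemiring R]

@[simp]
theorem pderiv_ofNat (i : σ) (n : ℕ) [n.AtLeastTwo] :
    pderiv i (ofNat(n) : MvPolynomial σ R) = 0 :=
  (pderiv i).map_natCast n

noncomputable def hessian (φ : MvPolynomial σ R) (x : σ → R) : Matrix σ σ R :=
  Matrix.of fun i j ↦ eval x (pderiv i (pderiv j φ))

variable [Fintype σ] {φ : MvPolynomial σ R} {n : ℕ}

theorem IsHomogeneous.sum_X_mul_pderiv_pderiv (h : φ.IsHomogeneous n) (i : σ) :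
    ∑ j, X j * pderiv i (pderiv j φ) + pderiv i φ = n • pderiv i φ := by
  classical
  have := congrArg (pderiv i) h.sum_X_mul_pderiv
  simp only [map_sum, pderiv_mul, pderiv_X, map_nsmul] at this
  rw [← this, Finset.sum_add_distrib]
  simp [Pi.single_apply, add_comm]

theorem IsHomogeneous.hessian_mulVec_eq_zero (h : φ.IsHomogeneous n) {x : σ → R}
    (hx : ∀ i, eval x (pderiv i φ) = 0) : hessian φ x *ᵥ x = 0 := by
  ext i
  simpa [hessian, Matrix.mulVec, dotProduct, hx, mul_comm] using
    congrArg (eval x) (h.sum_X_mul_pderiv_pderiv i)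

end MvPolynomial

theorem isHomogeneous_Q : Q.IsHomogeneous 6 := by
  have hX := isHomogeneous_X (σ := Fin 4) ℂ
  have hXp := isHomogeneous_X_pow (σ := Fin 4) (R := ℂ)
  have h5 : (5 : MvPolynomial (Fin 4) ℂ).IsHomogeneous 0 := by
    rw [← map_ofNat C 5]; exact isHomogeneous_C _ _
  refine .sub (.add (.sub (.add (.add ?_ ?_) ?_) ?_) ?_) (hXp 3 6)
  · exact (hXp 0 5).mul (hX 2)
  · exact (hX 0).mul (hXp 1 5)
  · exact (hX 1).mul (hXp 2 5)
  · exact ((h5.mul (hXp 0 2)).mul (hXp 1 2)).mul (hXp 2 2)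
  · exact ((((hXp 0 3).mul (hX 1)).add ((hX 0).mul (hXp 2 3))).add ((hXp 1 3).mul (hX 2))).mul
      (hXp 3 2)

section Coordinates

variable {K : Type*} [CommRing K]

def gradQ (x y z w : K) : Fin 4 → K :=
  ![5 * x ^ 4 * z + y ^ 5 - 10 * x * y ^ 2 * z ^ 2 + 3 * x ^ 2 * y * w ^ 2 + z ^ 3 * w ^ 2,
    5 * x * y ^ 4 + z ^ 5 - 10 * x ^ 2 * y * z ^ 2 + 3 * y ^ 2 * z * w ^ 2 + x ^ 3 * w ^ 2,
    x ^ 5 + 5 * y * z ^ 4 - 10 * x ^ 2 * y ^ 2 * z + 3 * x * z ^ 2 * w ^ 2 + y ^ 3 * w ^ 2,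
    2 * (x ^ 3 * y + x * z ^ 3 + y ^ 3 * z) * w - 6 * w ^ 5]

def hessBlockQ (x y z w : K) : Matrix (Fin 3) (Fin 3) K :=
  !![20 * x ^ 3 * z - 10 * y ^ 2 * z ^ 2 + 6 * x * y * w ^ 2,
      5 * y ^ 4 - 20 * x * y * z ^ 2 + 3 * x ^ 2 * w ^ 2,
      5 * x ^ 4 - 20 * x * y ^ 2 * z + 3 * z ^ 2 * w ^ 2;
    5 * y ^ 4 - 20 * x * y * z ^ 2 + 3 * x ^ 2 * w ^ 2,
      20 * x * y ^ 3 - 10 * x ^ 2 * z ^ 2 + 6 * y * z * w ^ 2,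
      5 * z ^ 4 - 20 * x ^ 2 * y * z + 3 * y ^ 2 * w ^ 2;
    5 * x ^ 4 - 20 * x * y ^ 2 * z + 3 * z ^ 2 * w ^ 2,
      5 * z ^ 4 - 20 * x ^ 2 * y * z + 3 * y ^ 2 * w ^ 2,
      20 * y * z ^ 3 - 10 * x ^ 2 * y ^ 2 + 6 * x * z * w ^ 2]

theorem gradQ_rotate (x y z w : K) : gradQ y z x w = gradQ x y z w ∘ ![1, 2, 0, 3] := by
  ext i
  fin_cases i <;>
    simp only [gradQ, Fin.zero_eta, Fin.mk_one, Fin.reduceFinMk, Function.comp_apply,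
      Matrix.cons_val_zero, Matrix.cons_val_one, Matrix.cons_val] <;>
    ring

theorem hessBlockQ_rotate (x y z w : K) :
    hessBlockQ y z x w = (hessBlockQ x y z w).submatrix (finRotate 3) (finRotate 3) := by
  ext i j
  fin_cases i <;> fin_cases j <;>
    simp only [hessBlockQ, Fin.zero_eta, Fin.mk_one, Fin.reduceFinMk, Matrix.submatrix_apply,
      finRotate_apply, Fin.reduceAdd, zero_add, Matrix.of_apply, Matrix.cons_val',
      Matrix.cons_val_zero, Matrix.cons_val_one, Matrix.cons_val, Matrix.cons_val_fin_one] <;>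
    ring

end Coordinates

section Certificate

variable {K : Type*} [Field K] [CharZero K] {x y z w : K}

theorem eq_zero_of_gradQ_eq_zero_of_det_eq_zero (hg : gradQ x y z w = 0)
    (hD : (hessBlockQ x y z w).det = 0) : x = 0 := by
  have h0 := congrFun hg 0
  have h1 := congrFun hg 1
  have h2 := congrFun hg 2
  have h3 := congrFun hg 3
  simp only [gradQ, Fin.isValue, Matrix.cons_val, Matrix.cons_val_zero, Matrix.cons_val_one,
    Pi.zero_apply] at h0 h1 h2 h3
  simp only [Matrix.det_fin_three, hessBlockQ, Fin.isValue, Matrix.of_apply, Matrix.cons_val',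
    Matrix.cons_val, Matrix.cons_val_zero, Matrix.cons_val_one, Matrix.cons_val_fin_one] at hD
  refine pow_eq_zero_iff (n := 19) (by norm_num) |>.mp ?_
  -- cofactors found by computer algebra
  linear_combination
    ((-79/4802)*x^2*y^2*z*w^2 + (-8483/307328)*x^3*y^4 + (1955/76832)*x^4*y*z^2
      + (405/21952)*x^5*w^2) * hD
    - ((403974298103/10976)*y^5*z^7*w^2 + (-7821/49)*x^2*z^2*w^10 + (39500/2401)*x^2*y*z^7*w^4
      + (-7110/2401)*x^2*y^3*z^3*w^6 + (-2827819928721/19208)*x^2*y^6*z^4*w^2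
      + (-7543469/153664)*x^3*z^5*w^6 + (-1060375/153664)*x^3*y*z^10
      + (95511/4802)*x^3*y^2*z*w^8 + (-2167589584011/12005)*x^3*y^3*z^6*w^2
      + (80895/10976)*x^3*y^5*z^2*w^4 + (1060375/76832)*x^3*y^8*z^3
      + (14143375/10976)*x^4*z^8*w^2 + (-26455465/153664)*x^4*y^2*z^4*w^4
      + (74846347/307328)*x^4*y^4*w^6 + (70695537409025/230496)*x^4*y^5*z^5
      + (2549125/153664)*x^4*y^7*z*w^2 + (26987036701/307328)*x^5*y*z^2*w^6
      + (148063625/76832)*x^5*y^2*z^7 + (1063911003018471/768320)*x^5*y^4*z^3*w^2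
      + (-1060375/153664)*x^5*y^9 + (-89887375579/768320)*x^6*w^8
      + (-34918671360933/384160)*x^6*y*z^5*w^2 + (5495887165/38416)*x^6*y^3*z*w^4
      + (3669875/76832)*x^6*y^6*z^2 + (126828141425/38416)*x^7*z^3*w^4
      + (-31369144003045/32928)*x^7*y^3*z^4 + (883875/19208)*x^7*y^5*w^2
      + (-113843196625/153664)*x^8*z^6 + (54290581930139/576240)*x^8*y^2*z^2*w^2
      + (-94447206866339/4609920)*x^9*y*w^4 + (9543375/153664)*x^9*y^4*z
      + (-3947908786567/230496)*x^10*y*z^3 + (132998889817/384160)*x^11*z*w^2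
      + (759158131331/131712)*x^12*y^2) * h0
    - ((-403974298103/10976)*y^5*z^5*w^4 + (403974298103/10976)*x*y^7*z^4*w^2
      + (7821/49)*x^2*w^12 + (-39500/2401)*x^2*y*z^5*w^6 + (-2607/686)*x^2*y^3*z*w^8
      + (-9875/2401)*x^2*y^4*z^6*w^2 + (7543469/153664)*x^3*z^3*w^8
      + (1060375/153664)*x^3*y*z^8*w^2 + (138725853351079/768320)*x^3*y^3*z^4*w^4
      + (-2125379/43904)*x^3*y^5*w^6 + (-2019871490515/32928)*x^3*y^6*z^5
      + (-14143375/10976)*x^4*z^6*w^4 + (4728397/307328)*x^4*y^2*z^2*w^6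
      + (-4813125/76832)*x^4*y^3*z^7 + (-44056433645977/109760)*x^4*y^5*z^3*w^2
      + (184256153/38416)*x^5*y*w^8 + (1696770375/153664)*x^5*y^2*z^5*w^2
      + (-4398590645/153664)*x^5*y^4*z*w^4 + (69840257283451/768320)*x^6*y*z^3*w^4
      + (562907397798979/460992)*x^6*y^4*z^4 + (-2481455454361/768320)*x^7*z*w^6
      + (478125/21952)*x^7*y*z^6 + (-166972489051/144060)*x^7*y^3*z^2*w^2
      + (112851742875/153664)*x^8*z^4*w^2 + (2276356943263/658560)*x^8*y^2*w^4
      + (-143098756057825/230496)*x^9*y^2*z^3 + (602515174053/54880)*x^10*y*z*w^2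
      + (-5314094194817/4609920)*x^11*y^3 + (569215983125/153664)*x^12*z^2) * h1
    - ((403974298103/5488)*x*y^6*z^5*w^2 + (7821/686)*x^2*y^2*z^2*w^8
      + (-1211922894309/10976)*x^2*y^5*z^3*w^4 + (-6137463/15680)*x^3*y*w^10
      + (2125379/219520)*x^3*y^4*z*w^6 + (403974298103/32928)*x^3*y^5*z^6
      + (20781557/31360)*x^4*y*z^3*w^6 + (-2729730906289/6860)*x^4*y^4*z^4*w^2
      + (-203845179/10976)*x^5*z*w^8 + (47334698336301/109760)*x^5*y^3*z^2*w^4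
      + (403974298103/784)*x^5*y^6*z^3 + (-198258087/48020)*x^6*z^4*w^4
      + (17708174447/192080)*x^6*y^2*w^6 + (-80414120475247/329280)*x^6*y^3*z^5
      + (506240725297997/2304960)*x^7*y^2*z^3*w^2 + (422727057349003/4609920)*x^8*y*z*w^4
      + (-408621328653/1568)*x^8*y^4*z^2 + (72137209945/588)*x^9*y*z^4
      + (2462331795089/768320)*x^9*y^3*w^2 + (-835212593017/153664)*x^10*z^2*w^2
      + (-3795791973775/131712)*x^11*y^2*z - x^14) * h2
    - ((-403974298103/21952)*y^7*z^6*w + (7821/98)*x^2*y^2*z*w^9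
      + (-403974298103/21952)*x^2*y^8*z^3*w + (2125379/31360)*x^3*y^4*w^7
      + (19056497469091/658560)*x^3*y^5*z^5*w + (-16982583/31360)*x^4*y*z^2*w^7
      + (2607/98)*x^5*w^9 + (15778232778767/219520)*x^5*y^6*z^2*w
      + (-198258087/6860)*x^6*z^3*w^5 + (191715927129589/658560)*x^6*y^3*z^4*w
      + (-215196107537/164640)*x^7*y^2*z^2*w^3 + (-9508459343/164640)*x^8*y*w^5
      + (1560145435981/109760)*x^8*y^4*z*w + (42584502210037/658560)*x^9*y*z^3*w
      + (-17530718627/27440)*x^10*z*w^3 + (-32496916283/3360)*x^11*y^2*w) * h3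

theorem all_eq_zero_of_gradQ_eq_zero_of_det_eq_zero (hg : gradQ x y z w = 0)
    (hD : (hessBlockQ x y z w).det = 0) : x = 0 ∧ y = 0 ∧ z = 0 ∧ w = 0 := by
  have rotate_grad {x y z w : K} (hg : gradQ x y z w = 0) : gradQ y z x w = 0 := by
    rw [gradQ_rotate, hg]; rfl
  have rotate_det {x y z w : K} (hD : (hessBlockQ x y z w).det = 0) :
      (hessBlockQ y z x w).det = 0 := by
    rwa [hessBlockQ_rotate, Matrix.det_submatrix_equiv_self]
  have hx := eq_zero_of_gradQ_eq_zero_of_det_eq_zero hg hD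
  have hy := eq_zero_of_gradQ_eq_zero_of_det_eq_zero (rotate_grad hg) (rotate_det hD)
  have hz := eq_zero_of_gradQ_eq_zero_of_det_eq_zero (rotate_grad (rotate_grad hg))
    (rotate_det (rotate_det hD))
  exact ⟨hx, hy, hz, by simpa [gradQ, hx, hy, hz] using congrFun hg 3⟩

end Certificate

theorem eval_pderiv_Q (p : Fin 4 → ℂ) (i : Fin 4) :
    eval p (pderiv i Q) = gradQ (p 0) (p 1) (p 2) (p 3) i := by
  fin_cases i <;> simp [Q, gradQ, pderiv_X] <;> ring

theorem hessian_Q_submatrix (p : Fin 4 → ℂ) :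
    (hessian Q p).submatrix ![0, 1, 2] ![0, 1, 2] = hessBlockQ (p 0) (p 1) (p 2) (p 3) := by
  ext i j
  fin_cases i <;> fin_cases j <;> simp [hessian, hessBlockQ, Q, pderiv_X] <;> ring

theorem every_singular_point_is_a_node_general (p : Fin 4 → ℂ) (hp : p ≠ 0)
    (hsing : ∀ i : Fin 4, eval p (pderiv i Q) = 0) :
    (Matrix.of fun i j : Fin 4 => eval p (pderiv i (pderiv j Q))).rank = 3 := by
  have hle : (hessian Q p).rank < 4 :=
    Matrix.rank_lt_card_of_mulVec_eq_zero hp (isHomogeneous_Q.hessian_mulVec_eq_zero hsing)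
  have hge : 3 ≤ (hessian Q p).rank := by
    refine Matrix.le_rank_of_det_submatrix_ne_zero _ ![0, 1, 2] ![0, 1, 2] fun hD ↦ hp ?_
    rw [hessian_Q_submatrix] at hD
    have hg : gradQ (p 0) (p 1) (p 2) (p 3) = 0 :=
      funext fun i ↦ by rw [← eval_pderiv_Q, hsing]; rfl
    obtain ⟨h0, h1, h2, h3⟩ := all_eq_zero_of_gradQ_eq_zero_of_det_eq_zero hg hD
    ext i
    fin_cases i <;> assumption
  change (hessian Q p).rank = 3
  omega

/-- Every singular point of the sextic surface `Q = 0` is a node: at every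
nonzero `p ∈ ℂ⁴` where `Q` and its four partial derivatives vanish, the
Hessian matrix of `Q` has rank exactly 3. -/
theorem every_singular_point_is_a_node (p : Fin 4 → ℂ) (hp : p ≠ 0)
    (hQ : eval p Q = 0) (hsing : ∀ i : Fin 4, eval p (pderiv i Q) = 0) :
    (Matrix.of fun i j : Fin 4 => eval p (pderiv i (pderiv j Q))).rank = 3 :=
  every_singular_point_is_a_node_general p hp hsing
end

section
/- The polynomial Q is invariant under the linear substitution given by the matrix g₂: composing Q with the linear map x ↦ g₂·x yields Q again as a polynomial. -/
open MvPolynomial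

/-!
Write `M` for the `3 × 3` block of `g₂`. Its entries `p, q, r = a/√−7, b/√−7, c/√−7` are the roots
of `7t³ − 7t² + 1`, and `Q = F₆ + F₄ x₃² − x₃⁶` where `F₄ = x₀³x₁ + x₀x₂³ + x₁³x₂` is the Klein quartic
and `F₆` is Klein's sextic invariant, which is `−1/2` times the determinant of one third of the
Hessian matrix `H` of `F₄`. Modulo the relations among `p, q, r`, both `F₄(Mx) = F₄(x)` and
`H(Mx) = M H(x) M` (the second derivative of the first, as `M = Mᵀ = M⁻¹`) are polynomial identities
of low degree; since `det M = −1`, taking determinants in the latter gives `F₆(Mx) = F₆(x)`.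
-/

open Matrix

theorem MvPolynomial.eval_aeval_linear {R σ : Type*} [CommRing R] [Fintype σ]
    (A : Matrix σ σ R) (x : σ → R) (P : MvPolynomial σ R) :
    eval x (aeval (fun i => ∑ j, C (A i j) * X j) P) = eval (A *ᵥ x) P := by
  have hA : (fun i => eval x (∑ j, C (A i j) * X j)) = A *ᵥ x := by
    ext i
    simp [mulVec, dotProduct]
  rw [aeval_eq_bind₁, ← hA]
  exact eval₂Hom_bind₁ _ _ _ P

section Klein

variable {R : Type*} [CommRing R]

/-- `p, q, r` are the roots of `7t³ − 7t² + 1`, listed in the cyclic order fixed by the last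
relation. -/
structure IsKleinTriple (p q r : R) : Prop where
  sum_eq_one : p + q + r = 1
  sum_mul_eq_zero : p * q + q * r + r * p = 0
  prod_eq : 7 * (p * q * r) = -1
  cyclic_sum_eq : 7 * (p ^ 2 * q + q ^ 2 * r + r ^ 2 * p) = 2

def kleinMatrix (p q r : R) : Matrix (Fin 3) (Fin 3) R :=
  !![p, r, q; r, q, p; q, p, r]

def kleinMatrix₄ (p q r : R) : Matrix (Fin 4) (Fin 4) R :=
  !![p, r, q, 0; r, q, p, 0; q, p, r, 0; 0, 0, 0, 1]

def kleinQuartic (x : Fin 3 → R) : R :=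
  x 0 ^ 3 * x 1 + x 0 * x 2 ^ 3 + x 1 ^ 3 * x 2

def kleinSextic (x : Fin 3 → R) : R :=
  x 0 ^ 5 * x 2 + x 0 * x 1 ^ 5 + x 1 * x 2 ^ 5 - 5 * x 0 ^ 2 * x 1 ^ 2 * x 2 ^ 2

/-- One third of the Hessian matrix of `kleinQuartic`. -/
def kleinHessian (x : Fin 3 → R) : Matrix (Fin 3) (Fin 3) R :=
  !![2 * x 0 * x 1, x 0 ^ 2, x 2 ^ 2; x 0 ^ 2, 2 * x 1 * x 2, x 1 ^ 2; x 2 ^ 2, x 1 ^ 2, 2 * x 0 * x 2]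

theorem kleinMatrix_mulVec (p q r : R) (x : Fin 3 → R) :
    kleinMatrix p q r *ᵥ x =
      ![p * x 0 + r * x 1 + q * x 2, r * x 0 + q * x 1 + p * x 2, q * x 0 + p * x 1 + r * x 2] := by
  ext i
  fin_cases i <;> simp [kleinMatrix, mulVec, dotProduct, Fin.sum_univ_three]

theorem det_kleinHessian (x : Fin 3 → R) : (kleinHessian x).det = -2 * kleinSextic x := by
  simp only [kleinHessian, kleinSextic, det_fin_three, of_apply, cons_val', cons_val_zero,
    cons_val_one, cons_val, cons_val_fin_one]
  ring

variable {p q r : R}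

theorem IsKleinTriple.det_kleinMatrix (h : IsKleinTriple p q r) : (kleinMatrix p q r).det = -1 := by
  have h₁ := h.sum_eq_one
  have h₂ := h.sum_mul_eq_zero
  simp only [kleinMatrix, det_fin_three, of_apply, cons_val', cons_val_zero, cons_val_one, cons_val,
    cons_val_fin_one]
  grind

theorem IsKleinTriple.kleinQuartic_mulVec (h : IsKleinTriple p q r) (x : Fin 3 → R) :
    kleinQuartic (kleinMatrix p q r *ᵥ x) = kleinQuartic x := by
  obtain ⟨h₁, h₂, h₃, h₄⟩ := h
  rw [kleinMatrix_mulVec]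
  simp only [kleinQuartic, cons_val_zero, cons_val_one, cons_val_two, head_cons, tail_cons]
  grind

theorem IsKleinTriple.kleinHessian_mulVec (h : IsKleinTriple p q r) (x : Fin 3 → R) :
    kleinHessian (kleinMatrix p q r *ᵥ x) =
      kleinMatrix p q r * kleinHessian x * kleinMatrix p q r := by
  obtain ⟨h₁, h₂, h₃, h₄⟩ := h
  rw [kleinMatrix_mulVec]
  simp only [kleinHessian, kleinMatrix, mul_fin_three, cons_val_zero, cons_val_one, cons_val_two,
    head_cons, tail_cons, EmbeddingLike.apply_eq_iff_eq, vecCons_inj, and_true]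
  grind

theorem IsKleinTriple.kleinSextic_mulVec [IsDomain R] [NeZero (2 : R)] (h : IsKleinTriple p q r)
    (x : Fin 3 → R) : kleinSextic (kleinMatrix p q r *ᵥ x) = kleinSextic x := by
  have hdet := congrArg det (h.kleinHessian_mulVec x)
  rw [det_mul, det_mul, h.det_kleinMatrix, det_kleinHessian, det_kleinHessian] at hdet
  exact mul_left_cancel₀ (neg_ne_zero.mpr two_ne_zero) (by linear_combination hdet)

end Klein

theorem eval_Q (x : Fin 4 → ℂ) :
    eval x Q = kleinSextic (Fin.init x) + kleinQuartic (Fin.init x) * x 3 ^ 2 - x 3 ^ 6 := by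
  simp [Q, kleinSextic, kleinQuartic, Fin.init]

theorem IsKleinTriple.eval_Q_mulVec {p q r : ℂ} (h : IsKleinTriple p q r) (x : Fin 4 → ℂ) :
    eval (kleinMatrix₄ p q r *ᵥ x) Q = eval x Q := by
  have hinit : Fin.init (kleinMatrix₄ p q r *ᵥ x) = kleinMatrix p q r *ᵥ Fin.init x := by
    rw [kleinMatrix_mulVec]
    ext i
    fin_cases i <;> simp [Fin.init, kleinMatrix₄, mulVec, dotProduct, Fin.sum_univ_four]
  have hlast : (kleinMatrix₄ p q r *ᵥ x) 3 = x 3 := by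
    simp [kleinMatrix₄, mulVec, dotProduct, Fin.sum_univ_four]
  rw [eval_Q, eval_Q, hinit, hlast, h.kleinSextic_mulVec, h.kleinQuartic_mulVec]

namespace IsPrimitiveRoot

variable {K : Type*} [Field K] {ω : K}

theorem cyclotomic_seven (hω : IsPrimitiveRoot ω 7) :
    ω ^ 6 + ω ^ 5 + ω ^ 4 + ω ^ 3 + ω ^ 2 + ω + 1 = 0 := by
  simpa [Finset.sum_range_succ, add_comm, add_left_comm, add_assoc] using
    hω.geom_sum_eq_zero (by norm_num)

/-- `1 + 2(ω + ω² + ω⁴) = ∑ₖ (k/7) ωᵏ` is the quadratic Gauss sum of `ℤ/7`. -/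
theorem gaussSum_seven_sq (hω : IsPrimitiveRoot ω 7) : (1 + 2 * (ω + ω ^ 2 + ω ^ 4)) ^ 2 = -7 := by
  linear_combination (4 * ω ^ 2 - 4 * ω + 8) * hω.cyclotomic_seven

theorem gaussSum_seven_ne_zero (hω : IsPrimitiveRoot ω 7) : 1 + 2 * (ω + ω ^ 2 + ω ^ 4) ≠ 0 := by
  have h7 : (7 : K) ≠ 0 := by exact_mod_cast hω.neZero'.out
  intro h
  apply h7
  linear_combination hω.gaussSum_seven_sq - (1 + 2 * (ω + ω ^ 2 + ω ^ 4)) * h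

theorem isKleinTriple {s : K} (hω : IsPrimitiveRoot ω 7) (hs : s = 1 + 2 * (ω + ω ^ 2 + ω ^ 4)) :
    IsKleinTriple (s⁻¹ * (ω ^ 2 - ω ^ 5)) (s⁻¹ * (ω - ω ^ 6)) (s⁻¹ * (ω ^ 4 - ω ^ 3)) := by
  have hΦ := hω.cyclotomic_seven
  have hs0 : s ≠ 0 := hs ▸ hω.gaussSum_seven_ne_zero
  constructor <;> grind

end IsPrimitiveRoot

/-- `Q` is invariant under the linear substitution `x ↦ g₂·x`, where
`g₂ = (1/√−7)·[[a,c,b,0],[c,b,a,0],[b,a,c,0],[0,0,0,√−7]]` with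
`a = ω² − ω⁵`, `b = ω − ω⁶`, `c = ω⁴ − ω³`, `√−7 = 1 + 2(ω + ω² + ω⁴)`
and `ω` a primitive seventh root of unity. -/
theorem Q_invariant_g2 (ω : ℂ) (hω : IsPrimitiveRoot ω 7)
    (s : ℂ) (hs : s = 1 + 2 * (ω + ω ^ 2 + ω ^ 4))
    (a b c : ℂ) (ha : a = ω ^ 2 - ω ^ 5) (hb : b = ω - ω ^ 6) (hc : c = ω ^ 4 - ω ^ 3)
    (g₂ : Matrix (Fin 4) (Fin 4) ℂ)
    (hg₂ : g₂ = s⁻¹ • !![a, c, b, 0; c, b, a, 0; b, a, c, 0; 0, 0, 0, s]) :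
    aeval (fun i : Fin 4 => ∑ j : Fin 4, C (g₂ i j) * X j) Q = Q := by
  have hs0 : s ≠ 0 := hs ▸ hω.gaussSum_seven_ne_zero
  have hg : g₂ = kleinMatrix₄ (s⁻¹ * a) (s⁻¹ * b) (s⁻¹ * c) := by
    rw [hg₂]
    ext i j
    fin_cases i <;> fin_cases j <;> simp [kleinMatrix₄, hs0]
  subst ha hb hc
  refine MvPolynomial.funext fun x => ?_
  rw [eval_aeval_linear, hg, (hω.isKleinTriple hs).eval_Q_mulVec]
end

section
/- The seven polynomials p₀₁², p₀₁p₀₂, p₀₁p₁₂, p₀₂², p₀₂p₁₂, p₁₂², g̃ are linearly independent modulo the ideal generated by f(u) and f(v): if a ℂ-linear combination λ₁p₀₁² + λ₂p₀₁p₀₂ + λ₃p₀₁p₁₂ + λ₄p₀₂² + λ₅p₀₂p₁₂ + λ₆p₁₂² + λ₇g̃ lies in the ideal of ℂ[u₀,u₁,u₂,v₀,v₁,v₂] generated by f(u₀,u₁,u₂) and f(v₀,v₁,v₂), then λ₁ = λ₂ = λ₃ = λ₄ = λ₅ = λ₆ = λ₇ = 0. -/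
/-!
Give the variables `u` bidegree `(1, 0)` and the variables `v` bidegree `(0, 1)`. The linear
combination is bihomogeneous of bidegree `(2, 2)`, whereas `f(u)` and `f(v)` are bihomogeneous of
bidegrees `(4, 0)` and `(0, 4)`, neither of which is `≤ (2, 2)`. Hence every element of the ideal
`(f(u), f(v))` has zero `(2, 2)`-component, so the combination vanishes as a polynomial, and
evaluating it at seven points forces all seven coefficients to vanish.
-/

open MvPolynomial

namespace Klein56

/-- The Klein quartic in the variables `u₀,u₁,u₂` (variables `0,1,2` of `Fin 6`):
`f(u) = u₀u₁³ + u₁u₂³ + u₂u₀³`. -/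
noncomputable def fu : MvPolynomial (Fin 6) ℂ :=
  X 0 * X 1 ^ 3 + X 1 * X 2 ^ 3 + X 2 * X 0 ^ 3

/-- The Klein quartic in the variables `v₀,v₁,v₂` (variables `3,4,5` of `Fin 6`):
`f(v) = v₀v₁³ + v₁v₂³ + v₂v₀³`. -/
noncomputable def fv : MvPolynomial (Fin 6) ℂ :=
  X 3 * X 4 ^ 3 + X 4 * X 5 ^ 3 + X 5 * X 3 ^ 3

/-- `p₀₁ = u₀v₁ − u₁v₀`. -/
noncomputable def p01 : MvPolynomial (Fin 6) ℂ := X 0 * X 4 - X 1 * X 3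
/-- `p₀₂ = u₀v₂ − u₂v₀`. -/
noncomputable def p02 : MvPolynomial (Fin 6) ℂ := X 0 * X 5 - X 2 * X 3
/-- `p₁₂ = u₁v₂ − u₂v₁`. -/
noncomputable def p12 : MvPolynomial (Fin 6) ℂ := X 1 * X 5 - X 2 * X 4

/-- `g̃ = u₀u₁v₁² + u₁u₂v₂² + u₂u₀v₀² + v₀v₁u₁² + v₁v₂u₂² + v₂v₀u₀²`. -/
noncomputable def gt : MvPolynomial (Fin 6) ℂ :=
  X 0 * X 1 * X 4 ^ 2 + X 1 * X 2 * X 5 ^ 2 + X 2 * X 0 * X 3 ^ 2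
    + X 3 * X 4 * X 1 ^ 2 + X 4 * X 5 * X 2 ^ 2 + X 5 * X 3 * X 0 ^ 2

section GradedRing

open DirectSum

variable {ι A σ : Type*} [Semiring A] [DecidableEq ι]
  [AddCommMonoid ι] [PartialOrder ι] [CanonicallyOrderedAdd ι]
  [SetLike σ A] [AddSubmonoidClass σ A] {𝒜 : ι → σ} [GradedRing 𝒜]

theorem _root_.DirectSum.eq_zero_of_mem_span_of_not_le {S : Set A} {m : ι}
    (hS : ∀ s ∈ S, ∃ i, s ∈ 𝒜 i ∧ ¬i ≤ m) {x : A} (hx : x ∈ 𝒜 m)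
    (hxS : x ∈ Ideal.span S) : x = 0 := by
  suffices h : ∀ y ∈ Ideal.span S, ∀ r : A, (decompose 𝒜 (r * y) m : A) = 0 by
    simpa [decompose_of_mem_same 𝒜 hx] using h x hxS 1
  intro y hy
  induction hy using Submodule.span_induction with
  | mem s hs =>
    obtain ⟨i, hsi, him⟩ := hS s hs
    exact fun r => coe_decompose_mul_of_right_mem_of_not_le 𝒜 hsi him
  | zero => simp
  | add y z _ _ hy hz =>
    intro r
    rw [mul_add, decompose_add, DirectSum.add_apply, AddMemClass.coe_add, hy r, hz r, add_zero]
  | smul c y _ hy => intro r; simpa [mul_assoc] using hy (r * c)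

end GradedRing

def bidegree : Fin 6 → ℕ × ℕ := ![(1, 0), (1, 0), (1, 0), (0, 1), (0, 1), (0, 1)]

lemma isWeightedHomogeneous_fu : IsWeightedHomogeneous bidegree fu (4, 0) := by
  have h := isWeightedHomogeneous_X ℂ bidegree
  exact (((h 0).mul ((h 1).pow 3)).add ((h 1).mul ((h 2).pow 3))).add ((h 2).mul ((h 0).pow 3))

lemma isWeightedHomogeneous_fv : IsWeightedHomogeneous bidegree fv (0, 4) := by
  have h := isWeightedHomogeneous_X ℂ bidegree
  exact (((h 3).mul ((h 4).pow 3)).add ((h 4).mul ((h 5).pow 3))).add ((h 5).mul ((h 3).pow 3))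

lemma isWeightedHomogeneous_p01 : IsWeightedHomogeneous bidegree p01 (1, 1) := by
  have h := isWeightedHomogeneous_X ℂ bidegree
  exact ((h 0).mul (h 4)).sub ((h 1).mul (h 3))

lemma isWeightedHomogeneous_p02 : IsWeightedHomogeneous bidegree p02 (1, 1) := by
  have h := isWeightedHomogeneous_X ℂ bidegree
  exact ((h 0).mul (h 5)).sub ((h 2).mul (h 3))

lemma isWeightedHomogeneous_p12 : IsWeightedHomogeneous bidegree p12 (1, 1) := by
  have h := isWeightedHomogeneous_X ℂ bidegree
  exact ((h 1).mul (h 5)).sub ((h 2).mul (h 4))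

lemma isWeightedHomogeneous_gt : IsWeightedHomogeneous bidegree gt (2, 2) := by
  have h := isWeightedHomogeneous_X ℂ bidegree
  exact (((((((h 0).mul (h 1)).mul ((h 4).pow 2)).add (((h 1).mul (h 2)).mul ((h 5).pow 2))).add
    (((h 2).mul (h 0)).mul ((h 3).pow 2))).add (((h 3).mul (h 4)).mul ((h 1).pow 2))).add
    (((h 4).mul (h 5)).mul ((h 2).pow 2))).add (((h 5).mul (h 3)).mul ((h 0).pow 2))

noncomputable def combination (l : Fin 7 → ℂ) : MvPolynomial (Fin 6) ℂ :=
  C (l 0) * p01 ^ 2 + C (l 1) * (p01 * p02) + C (l 2) * (p01 * p12)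
    + C (l 3) * p02 ^ 2 + C (l 4) * (p02 * p12) + C (l 5) * p12 ^ 2 + C (l 6) * gt

lemma isWeightedHomogeneous_combination (l : Fin 7 → ℂ) :
    IsWeightedHomogeneous bidegree (combination l) (2, 2) := by
  have h01 := isWeightedHomogeneous_p01
  have h02 := isWeightedHomogeneous_p02
  have h12 := isWeightedHomogeneous_p12
  exact ((((((h01.pow 2).C_mul _).add ((h01.mul h02).C_mul _)).add ((h01.mul h12).C_mul _)).add
    ((h02.pow 2).C_mul _)).add ((h02.mul h12).C_mul _)).add ((h12.pow 2).C_mul _) |>.add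
    (isWeightedHomogeneous_gt.C_mul _)

lemma eq_zero_of_combination_eq_zero {l : Fin 7 → ℂ} (h : combination l = 0) (i : Fin 7) :
    l i = 0 := by
  have e : ∀ x : Fin 6 → ℂ, eval x (combination l) = 0 := fun x => by rw [h, map_zero]
  have e1 := e ![1, 0, 0, 0, 1, 0]
  have e2 := e ![1, 0, 0, 0, 0, 1]
  have e3 := e ![0, 1, 0, 0, 0, 1]
  have e4 := e ![1, 0, 0, 0, 1, 1]
  have e5 := e ![0, 1, 0, 1, 0, 1]
  have e6 := e ![1, 1, 0, 0, 0, 1]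
  have e7 := e ![1, 1, 0, 0, 1, 0]
  simp only [combination, p01, p02, p12, gt, map_add, map_sub, map_mul, map_pow, eval_C, eval_X,
    Matrix.cons_val] at e1 e2 e3 e4 e5 e6 e7
  have h0 : l 0 = 0 := by linear_combination e1
  have h3 : l 3 = 0 := by linear_combination e2
  have h5 : l 5 = 0 := by linear_combination e3
  have h1 : l 1 = 0 := by linear_combination e4 - e1 - e2
  have h2 : l 2 = 0 := by linear_combination e1 + e3 - e5
  have h4 : l 4 = 0 := by linear_combination e6 - e2 - e3
  have h6 : l 6 = 0 := by linear_combination e7 - e1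
  fin_cases i <;> assumption

/-- The seven polynomials `p₀₁², p₀₁p₀₂, p₀₁p₁₂, p₀₂², p₀₂p₁₂, p₁₂², g̃` are
linearly independent modulo the ideal generated by `f(u)` and `f(v)`. -/
theorem linearly_independent_mod_ideal (l : Fin 7 → ℂ)
    (h : C (l 0) * p01 ^ 2 + C (l 1) * (p01 * p02) + C (l 2) * (p01 * p12)
        + C (l 3) * p02 ^ 2 + C (l 4) * (p02 * p12) + C (l 5) * p12 ^ 2
        + C (l 6) * gt ∈ Ideal.span ({fu, fv} : Set (MvPolynomial (Fin 6) ℂ))) :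
    ∀ i : Fin 7, l i = 0 := by
  let := weightedGradedAlgebra ℂ bidegree
  have hS : ∀ s ∈ ({fu, fv} : Set (MvPolynomial (Fin 6) ℂ)),
      ∃ d, s ∈ weightedHomogeneousSubmodule ℂ bidegree d ∧ ¬d ≤ (2, 2) := by
    rintro s (rfl | rfl)
    · exact ⟨(4, 0), isWeightedHomogeneous_fu, by decide⟩
    · exact ⟨(0, 4), isWeightedHomogeneous_fv, by decide⟩
  exact eq_zero_of_combination_eq_zero
    (DirectSum.eq_zero_of_mem_span_of_not_le hS (isWeightedHomogeneous_combination l) h)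

end Klein56
end
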